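/- arXiv:2103.01036 — 3 statements merged into one kernel-verified Lean document; each statement's English description precedes it below -/
import Mathlib

section
/- If A is a 2-step nilpotent algebra of dimension n over a field and k = dim A², then k ≤ n + (1 - √(4n+1))/2; i.e., k is an integer satisfying k² - (2n+1)k + n² ≥ 0 together with k ≤ n, which is equivalent to k ≤ (n-k)². -/
open Module

/-!
The square `W = A²` is annihilated from both sides, so the multiplication descends to a bilinear
map `A/W × A/W → A` whose values still span `W`. Hence `k = dim W ≤ dim (A/W)² = (n - k)²`, and
the quadratic inequality is this bound rewritten over `ℤ`.
-/

open Submodule TensorProduct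

namespace LinearMap

variable {K M N P : Type*} [Field K] [AddCommGroup M] [Module K M] [AddCommGroup N] [Module K N]
  [AddCommGroup P] [Module K P]

theorem span_apply₂_le_range_lift (f : M →ₗ[K] N →ₗ[K] P) :
    span K {z | ∃ x y, f x y = z} ≤ range (lift f) :=
  span_le.mpr <| by
    rintro _ ⟨x, y, rfl⟩
    exact ⟨x ⊗ₜ y, lift.tmul x y⟩

theorem finrank_span_apply₂_le [FiniteDimensional K M] [FiniteDimensional K N]
    (f : M →ₗ[K] N →ₗ[K] P) :
    finrank K (span K {z | ∃ x y, f x y = z}) ≤ finrank K M * finrank K N :=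
  calc finrank K (span K {z | ∃ x y, f x y = z})
      _ ≤ finrank K (range (lift f)) := finrank_mono (span_apply₂_le_range_lift f)
      _ ≤ finrank K (M ⊗[K] N) := (lift f).finrank_range_le
      _ = finrank K M * finrank K N := finrank_tensorProduct

theorem finrank_span_apply₂_le_finrank_quotient_mul [FiniteDimensional K M]
    [FiniteDimensional K N] (f : M →ₗ[K] N →ₗ[K] P) {M' : Submodule K M} {N' : Submodule K N}
    (hM' : M' ≤ ker f) (hN' : N' ≤ ker f.flip) :
    finrank K (span K {z | ∃ x y, f x y = z}) ≤ finrank K (M ⧸ M') * finrank K (N ⧸ N') := by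
  have hvalues : {z | ∃ x y, f x y = z} = {z | ∃ x y, f.liftQ₂ M' N' hM' hN' x y = z} := by
    ext z
    constructor
    · rintro ⟨x, y, rfl⟩
      exact ⟨Submodule.Quotient.mk x, Submodule.Quotient.mk y, rfl⟩
    · rintro ⟨⟨x⟩, ⟨y⟩, rfl⟩
      exact ⟨x, y, rfl⟩
  rw [hvalues]
  exact finrank_span_apply₂_le _

theorem span_apply₂_le_ker {f : M →ₗ[K] M →ₗ[K] M} (h : ∀ x y z, f (f x y) z = 0) :
    span K {z | ∃ x y, f x y = z} ≤ ker f :=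
  span_le.mpr <| by
    rintro _ ⟨x, y, rfl⟩
    exact LinearMap.ext (h x y)

theorem span_apply₂_le_ker_flip {f : M →ₗ[K] M →ₗ[K] M} (h : ∀ x y z, f x (f y z) = 0) :
    span K {z | ∃ x y, f x y = z} ≤ ker f.flip :=
  span_le.mpr <| by
    rintro _ ⟨x, y, rfl⟩
    exact LinearMap.ext fun z => h z x y

end LinearMap

theorem Nat.sq_sub_mul_add_sq_nonneg_of_le_sub_sq {n k : ℕ} (hkn : k ≤ n) (h : k ≤ (n - k) ^ 2) :
    (k : ℤ) ^ 2 - (2 * n + 1) * k + n ^ 2 ≥ 0 := by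
  have hℤ : (k : ℤ) ≤ ((n : ℤ) - k) ^ 2 := by
    rw [← Nat.cast_sub hkn]
    exact_mod_cast h
  nlinarith

/-- If `A` is an `n`-dimensional 2-step nilpotent algebra and `k = dim A²`,
then `k ≤ n + (1 - √(4n+1))/2`, i.e. `k ≤ n` and `k² - (2n+1)k + n² ≥ 0`
(equivalently `k ≤ (n-k)²`). -/
theorem two_step_nilpotent_square_dim_bound {F V : Type*} [Field F] [AddCommGroup V]
    [Module F V] [FiniteDimensional F V] (μ : V →ₗ[F] V →ₗ[F] V)
    (h2 : ∀ x y z : V, μ (μ x y) z = 0 ∧ μ x (μ y z) = 0)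
    (n k : ℕ) (hn : n = finrank F V)
    (hk : k = finrank F (Submodule.span F {z : V | ∃ x y : V, μ x y = z})) :
    k ≤ n ∧ (k : ℤ) ^ 2 - (2 * n + 1) * k + n ^ 2 ≥ 0 ∧ k ≤ (n - k) ^ 2 := by
  set W := span F {z : V | ∃ x y : V, μ x y = z}
  have hkn : k ≤ n := hk ▸ hn ▸ W.finrank_le
  have hquot : finrank F (V ⧸ W) = n - k := by
    rw [hn, hk, ← W.finrank_quotient_add_finrank, Nat.add_sub_cancel]
  have hbound : k ≤ (n - k) ^ 2 := by
    rw [sq, ← hquot, hk]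
    exact μ.finrank_span_apply₂_le_finrank_quotient_mul
      (LinearMap.span_apply₂_le_ker fun x y z => (h2 x y z).1)
      (LinearMap.span_apply₂_le_ker_flip fun x y z => (h2 x y z).2)
  exact ⟨hkn, Nat.sq_sub_mul_add_sq_nonneg_of_le_sub_sq hkn hbound, hbound⟩
end

section
/- Let A be an anticommutative 2-step nilpotent algebra over ℂ of even dimension n with dim A² = 1. Then dim ann(A) ≥ 2. -/
open Module

/-- The two-sided annihilator `ann(A) = {a : aA = Aa = 0}` of the algebra `(V, μ)`. -/
def annihilator {F V : Type*} [Field F] [AddCommGroup V] [Module F V]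
    (μ : V →ₗ[F] V →ₗ[F] V) : Submodule F V where
  carrier := {a | ∀ x : V, μ a x = 0 ∧ μ x a = 0}
  zero_mem' := fun x => by simp
  add_mem' := fun {a b} ha hb x => by
    constructor
    · simp [map_add, LinearMap.add_apply, (ha x).1, (hb x).1]
    · simp [map_add, (ha x).2, (hb x).2]
  smul_mem' := fun c a ha x => by
    constructor
    · simp [map_smul, LinearMap.smul_apply, (ha x).1]
    · simp [map_smul, (ha x).2]

/-!
Since `A²` is a line `⟨e⟩`, the product is `μ x y = B x y • e` for a skew form `B`, and
`ann(A)` is the radical of `B`, which contains `e`. Restricted to a hyperplane complementary to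
`e`, the form `B` is skew of odd size `n - 1`, hence degenerate; a vector in the radical of the
restriction lies in the radical of `B` and is independent of `e`.
-/

open scoped Matrix in
theorem Matrix.det_eq_zero_of_transpose_eq_neg {n R : Type*} [Fintype n] [DecidableEq n]
    [CommRing R] [NoZeroDivisors R] [NeZero (2 : R)] {M : Matrix n n R}
    (hM : Mᵀ = -M) (hn : Odd (Fintype.card n)) : M.det = 0 := by
  have hdet : M.det = -M.det :=
    calc M.det = Mᵀ.det := M.det_transpose.symm
      _ = -M.det := by rw [hM, Matrix.det_neg, hn.neg_one_pow, neg_one_mul]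
  have h2 : (2 : R) * M.det = 0 := by linear_combination hdet
  exact (mul_eq_zero.mp h2).resolve_left two_ne_zero

namespace LinearMap

variable {K V : Type*} [Field K] [NeZero (2 : K)] [AddCommGroup V] [Module K V]
  [FiniteDimensional K V]

theorem not_separatingLeft_of_odd_finrank {B : V →ₗ[K] V →ₗ[K] K}
    (hB : ∀ x y, B x y = -B y x) (hV : Odd (finrank K V)) : ¬B.SeparatingLeft := by
  let b := finBasis K V
  rw [separatingLeft_iff_det_ne_zero b, not_not]
  refine Matrix.det_eq_zero_of_transpose_eq_neg ?_ (by rwa [Fintype.card_fin])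
  ext i j
  simp [hB (b j) (b i)]

theorem two_le_finrank_ker_of_even_finrank {B : V →ₗ[K] V →ₗ[K] K}
    (hB : ∀ x y, B x y = -B y x) (hV : Even (finrank K V)) (hker : ker B ≠ ⊥) :
    2 ≤ finrank K (ker B) := by
  obtain ⟨e, he, he0⟩ := Submodule.exists_mem_ne_zero_of_ne_bot hker
  obtain ⟨f, hfe⟩ := Projective.exists_dual_eq_one K he0
  have hf0 : f ≠ 0 := fun h => by simp [h] at hfe
  have hW : Odd (finrank K (ker f)) := by
    rwa [← Nat.not_even_iff_odd, ← Nat.even_add_one, Dual.finrank_ker_add_one_of_ne_zero hf0]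
  obtain ⟨⟨w, hwf⟩, hwB, hw0⟩ : ∃ w : ker f, (∀ y : ker f, B w y = 0) ∧ w ≠ 0 := by
    simpa only [SeparatingLeft, not_forall, exists_prop, domRestrict₁₂_apply] using
      not_separatingLeft_of_odd_finrank (B := B.domRestrict₁₂ (ker f) (ker f))
        (fun x y => hB x y) hW
  have hwker : w ∈ ker B := by
    refine mem_ker.mpr (ext fun v => ?_)
    have hv : v - f v • e ∈ ker f := by simp [hfe]
    have hwe : B w e = 0 := by rw [hB, mem_ker.mp he, zero_apply, neg_zero]
    calc B w v = B w (v - f v • e) + f v * B w e := by simp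
      _ = 0 := by rw [hwB ⟨_, hv⟩, hwe, mul_zero, add_zero]
  have hli : LinearIndependent K ![e, w] := by
    refine linearIndependent_fin2.mpr ⟨by simpa using hw0, fun a h => ?_⟩
    simpa [mem_ker.mp hwf, hfe] using congrArg f h
  calc 2 = finrank K (Submodule.span K (Set.range ![e, w])) := by
        rw [finrank_span_eq_card hli, Fintype.card_fin]
    _ ≤ finrank K (ker B) := by
        refine Submodule.finrank_mono (Submodule.span_le.mpr ?_)
        simp [Set.insert_subset_iff, he, hwker]

end LinearMap

section Annihilator

variable {F V : Type*} [Field F] [AddCommGroup V] [Module F V] {μ : V →ₗ[F] V →ₗ[F] V}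

theorem span_products_le_annihilator (h2 : ∀ x y z : V, μ (μ x y) z = 0 ∧ μ x (μ y z) = 0) :
    Submodule.span F {z : V | ∃ x y : V, μ x y = z} ≤ annihilator μ := by
  rw [Submodule.span_le]
  rintro _ ⟨x, y, rfl⟩ z
  exact ⟨(h2 x y z).1, (h2 z x y).2⟩

theorem annihilator_eq_ker_compr₂ (hanti : ∀ x y : V, μ x y = -μ y x) {f : Dual F V}
    (hf : Disjoint (Submodule.span F {z : V | ∃ x y : V, μ x y = z}) (LinearMap.ker f)) :
    annihilator μ = LinearMap.ker (μ.compr₂ f) := by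
  ext a
  have hprod : ∀ x, f (μ a x) = 0 ↔ μ a x = 0 := fun x =>
    ⟨fun h => Submodule.disjoint_def.mp hf _ (Submodule.subset_span ⟨a, x, rfl⟩) h,
      fun h => by rw [h, map_zero]⟩
  change (∀ x, μ a x = 0 ∧ μ x a = 0) ↔ μ.compr₂ f a = 0
  simp only [LinearMap.ext_iff, LinearMap.compr₂_apply, LinearMap.zero_apply, hprod]
  exact ⟨fun h x => (h x).1, fun h x => ⟨h x, by rw [hanti, h, neg_zero]⟩⟩

end Annihilator

/-- If `A` is an anticommutative 2-step nilpotent complex algebra of even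
dimension `n` with `dim A² = 1`, then `dim ann(A) ≥ 2`. -/
theorem ann_dim_ge_two_of_even_dim {V : Type*} [AddCommGroup V] [Module ℂ V]
    [FiniteDimensional ℂ V] (μ : V →ₗ[ℂ] V →ₗ[ℂ] V)
    (hanti : ∀ x y : V, μ x y = - μ y x)
    (h2 : ∀ x y z : V, μ (μ x y) z = 0 ∧ μ x (μ y z) = 0)
    (hEven : Even (finrank ℂ V))
    (hsq : finrank ℂ (Submodule.span ℂ {z : V | ∃ x y : V, μ x y = z}) = 1) :
    2 ≤ finrank ℂ (annihilator μ) := by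
  set S := Submodule.span ℂ {z : V | ∃ x y : V, μ x y = z}
  obtain ⟨e, heS, he0⟩ := Submodule.exists_mem_ne_zero_of_ne_bot
    (Submodule.one_le_finrank_iff.mp hsq.ge)
  obtain ⟨f, hfe⟩ := Projective.exists_dual_eq_one ℂ he0
  have hdisj : Disjoint S (LinearMap.ker f) := by
    rw [eq_span_singleton_of_mem_of_finrank_eq_one hsq heS he0, disjoint_comm,
      Submodule.disjoint_span_singleton' he0]
    simp [hfe]
  have heann : e ∈ annihilator μ := span_products_le_annihilator h2 heS
  rw [annihilator_eq_ker_compr₂ hanti hdisj] at heann ⊢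
  refine LinearMap.two_le_finrank_ker_of_even_finrank (fun x y => ?_) hEven
    ((Submodule.ne_bot_iff _).mpr ⟨e, heann, he0⟩)
  simp [hanti x y]
end

section
/- The 5-dimensional complex algebra 𝒜⁴₀₅ with nonzero products e₁e₁ = e₂, e₁e₂ = e₄, e₁e₃ = e₄, e₂e₁ = e₄, e₃e₃ = e₄ (and e₅ annihilating everything) degenerates to the algebra 𝒜⁴₀₆(1) with products e₁e₁ = e₂, e₁e₂ = e₄, e₁e₃ = e₄, e₂e₁ = e₄; a parametric basis is E₁ᵗ = t e₁, E₂ᵗ = t² e₂, E₃ᵗ = t² e₃, E₄ᵗ = t³ e₄, E₅ᵗ = e₅. -/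
/-!
Give `e₁, …, e₅` the weights `1, 2, 2, 3, 0`. In the basis `Eᵢᵗ = t ^ wᵢ • eᵢ` a structure
constant `c i j m` of `𝒜⁴₀₅` becomes `t ^ (wᵢ + wⱼ - wₘ) * c i j m`. Every nonzero constant has
`wₘ ≤ wᵢ + wⱼ`, so these are polynomials in `t`, and at `t = 0` only the products of weight zero
survive. Those are exactly the products of `𝒜⁴₀₆(1)`: the only other one, `e₃e₃ = e₄`, has
weight `2 + 2 - 3 = 1` and disappears in the limit.
-/

open Module Filter Topology

/-- Structure constants of the algebra `𝒜⁴₀₅` (basis `e₁,…,e₅`, 0-indexed):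
`e₁e₁ = e₂`, `e₁e₂ = e₄`, `e₁e₃ = e₄`, `e₂e₁ = e₄`, `e₃e₃ = e₄`. -/
noncomputable def cA : Fin 5 → Fin 5 → Fin 5 → ℂ := fun i j m =>
  if i = 0 ∧ j = 0 ∧ m = 1 then 1
  else if i = 0 ∧ j = 1 ∧ m = 3 then 1
  else if i = 0 ∧ j = 2 ∧ m = 3 then 1
  else if i = 1 ∧ j = 0 ∧ m = 3 then 1
  else if i = 2 ∧ j = 2 ∧ m = 3 then 1
  else 0

/-- Structure constants of the algebra `𝒜⁴₀₆(1)`: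
`e₁e₁ = e₂`, `e₁e₂ = e₄`, `e₁e₃ = e₄`, `e₂e₁ = e₄`. -/
noncomputable def cB : Fin 5 → Fin 5 → Fin 5 → ℂ := fun i j m =>
  if i = 0 ∧ j = 0 ∧ m = 1 then 1
  else if i = 0 ∧ j = 1 ∧ m = 3 then 1
  else if i = 0 ∧ j = 2 ∧ m = 3 then 1
  else if i = 1 ∧ j = 0 ∧ m = 3 then 1
  else 0

/-- The multiplication of `𝒜⁴₀₅` on `ℂ⁵`. -/
noncomputable def mulA (x y : Fin 5 → ℂ) : Fin 5 → ℂ :=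
  fun m => ∑ i, ∑ j, x i * y j * cA i j m

/-- The parametric basis `E₁ᵗ = t e₁, E₂ᵗ = t² e₂, E₃ᵗ = t² e₃, E₄ᵗ = t³ e₄, E₅ᵗ = e₅`. -/
noncomputable def E (t : ℂ) : Fin 5 → (Fin 5 → ℂ) :=
  fun i => (![t, t ^ 2, t ^ 2, t ^ 3, 1] i) • (Pi.single i 1 : Fin 5 → ℂ)

/-- The bilinear product on `ι → K` with structure constants `c`: `eᵢ eⱼ = ∑ₘ c i j m • eₘ`. -/
noncomputable def mulOfConsts {ι K : Type*} [Fintype ι] [Mul K] [AddCommMonoid K]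
    (c : ι → ι → ι → K) (x y : ι → K) : ι → K :=
  fun m => ∑ i, ∑ j, x i * y j * c i j m

def powSingle {ι K : Type*} [DecidableEq ι] [Monoid K] [Zero K] (d : ι → ℕ) (t : K) (i : ι) :
    ι → K :=
  Pi.single i (t ^ d i)

theorem linearIndependent_powSingle {ι K : Type*} [DecidableEq ι] [CommRing K] [IsDomain K]
    (d : ι → ℕ) {t : K} (ht : t ≠ 0) : LinearIndependent K (powSingle d t) :=
  Pi.linearIndependent_single_of_ne_zero fun _ => pow_ne_zero _ ht

theorem tendsto_pow_sub_mul_nhdsNE {K : Type*} [MonoidWithZero K] [TopologicalSpace K]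
    [ContinuousMul K] {a b : ℕ} {x : K} (h : x ≠ 0 → b ≤ a) :
    Tendsto (fun t : K => t ^ (a - b) * x) (𝓝[≠] 0) (𝓝 (if a = b then x else 0)) := by
  have hlim : (0 : K) ^ (a - b) * x = if a = b then x else 0 := by
    by_cases hx : x = 0
    · simp [hx]
    · have := h hx
      by_cases hab : a = b
      · simp [hab]
      · rw [zero_pow (by omega), zero_mul, if_neg hab]
  rw [← hlim]
  exact ((continuous_pow _).mul continuous_const).tendsto 0 |>.mono_left nhdsWithin_le_nhds

section Weights

variable {ι K : Type*} [Fintype ι] [DecidableEq ι] [CommSemiring K]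

theorem mulOfConsts_powSingle (c : ι → ι → ι → K) (d : ι → ℕ) (t : K) (i j : ι) :
    mulOfConsts c (powSingle d t i) (powSingle d t j) = fun m => t ^ (d i + d j) * c i j m := by
  funext m
  simp [mulOfConsts, powSingle, Pi.single_apply, pow_add]

theorem sum_smul_powSingle (a : ι → K) (d : ι → ℕ) (t : K) :
    ∑ m, a m • powSingle d t m = fun m => a m * t ^ d m := by
  funext m
  simp [powSingle, Pi.single_apply]

theorem mulOfConsts_powSingle_eq_sum {c : ι → ι → ι → K} {d : ι → ℕ}
    (hc : ∀ i j m, c i j m ≠ 0 → d m ≤ d i + d j) (t : K) (i j : ι) :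
    mulOfConsts c (powSingle d t i) (powSingle d t j) =
      ∑ m, (t ^ (d i + d j - d m) * c i j m) • powSingle d t m := by
  rw [mulOfConsts_powSingle, sum_smul_powSingle]
  funext m
  by_cases h : c i j m = 0
  · simp [h]
  · rw [mul_right_comm, ← pow_add, Nat.sub_add_cancel (hc i j m h)]

end Weights

theorem mulA_eq_mulOfConsts : mulA = mulOfConsts cA := rfl

def weightsA405 : Fin 5 → ℕ := ![1, 2, 2, 3, 0]

theorem E_eq_powSingle (t : ℂ) : E t = powSingle weightsA405 t := by
  funext i
  rw [E, powSingle, ← Pi.single_smul', smul_eq_mul, mul_one]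
  fin_cases i <;> simp [weightsA405]

theorem weightsA405_le_of_cA_ne_zero {i j m : Fin 5} (h : cA i j m ≠ 0) :
    weightsA405 m ≤ weightsA405 i + weightsA405 j := by
  unfold cA at h
  split_ifs at h <;> simp_all [weightsA405]

theorem cB_eq_ite (i j m : Fin 5) :
    cB i j m = if weightsA405 i + weightsA405 j = weightsA405 m then cA i j m else 0 := by
  unfold cA cB
  split_ifs <;> simp_all [weightsA405]

/-- `𝒜⁴₀₅` degenerates to `𝒜⁴₀₆(1)` via the parametric basis
`(t e₁, t² e₂, t² e₃, t³ e₄, e₅)`: for every `t ≠ 0` the family `Eᵗ` is a basis, and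
the structure constants of `𝒜⁴₀₅` in this basis converge, as `t → 0`, to the structure
constants of `𝒜⁴₀₆(1)`. -/
theorem A405_degenerates_to_A406 :
    ∃ c : ℂ → Fin 5 → Fin 5 → Fin 5 → ℂ,
      (∀ t : ℂ, t ≠ 0 → LinearIndependent ℂ (E t) ∧
        ∀ i j : Fin 5, mulA (E t i) (E t j) = ∑ m, c t i j m • E t m) ∧
      (∀ i j m : Fin 5,
        Tendsto (fun t => c t i j m) (𝓝[≠] (0 : ℂ)) (𝓝 (cB i j m))) := by
  have hw : ∀ i j m, cA i j m ≠ 0 → weightsA405 m ≤ weightsA405 i + weightsA405 j :=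
    fun _ _ _ => weightsA405_le_of_cA_ne_zero
  refine ⟨fun t i j m => t ^ (weightsA405 i + weightsA405 j - weightsA405 m) * cA i j m,
    fun t ht => ⟨?_, fun i j => ?_⟩, fun i j m => ?_⟩
  · rw [E_eq_powSingle]
    exact linearIndependent_powSingle weightsA405 ht
  · simp only [E_eq_powSingle, mulA_eq_mulOfConsts]
    exact mulOfConsts_powSingle_eq_sum hw t i j
  · rw [cB_eq_ite]
    exact tendsto_pow_sub_mul_nhdsNE (hw i j m)
end
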